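/- arXiv:2004.05677 — 5 statements merged into one kernel-verified Lean document; each statement's English description precedes it below -/
import Mathlib

section
/- Let p be an odd prime, n ≥ 1, q = p^(2^n), and G = PGL₂(F_q). If y ∈ G is an involution lying in the image of SL₂(F_q) in G, then the centralizer C_G(y) is isomorphic to the dihedral group of order 2(q−1). -/
/-!
An inner involution of `PGL₂(F)` is the image of some `g ∈ SL₂(F)` whose square is scalar
while `g` is not; by Cayley–Hamilton `g` has trace zero. If `2 ≠ 0` and `-1 = j²` in `F` (true
for `q ≡ 1 mod 4`), then `g` has the two eigenvalues `±j`, so its image is conjugate to the image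
of `diag(-1, 1)`. Modulo scalars, the matrices commuting with `diag(-1, 1)` up to a scalar are the
diagonal and the antidiagonal ones: the normalizer of the split torus `Fˣ`, which is cyclic of
order `q - 1` and inverted by the antidiagonal involutions. Hence the centralizer is dihedral
of order `2(q - 1)`.
-/

open Matrix

/-- `PGL₂(F)`: the projective general linear group, i.e. the quotient of `GL₂(F)`
by its center. -/
abbrev ProjectiveGL2 (F : Type) [Field F] : Type :=
  Matrix.GeneralLinearGroup (Fin 2) F ⧸ Subgroup.center (Matrix.GeneralLinearGroup (Fin 2) F)

/-- The image of the natural map `SL₂(F) → PGL₂(F)`: the socle of `PGL₂(F)`,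
isomorphic to `PSL₂(F)`. -/
def socleSL2 (F : Type) [Field F] : Subgroup (ProjectiveGL2 F) :=
  ((QuotientGroup.mk' (Subgroup.center (Matrix.GeneralLinearGroup (Fin 2) F))).comp
    Matrix.SpecialLinearGroup.toGL).range

theorem Nat.pow_two_pow_mod_four_of_odd {p n : ℕ} (hp : Odd p) (hn : n ≠ 0) :
    p ^ 2 ^ n % 4 = 1 := by
  obtain ⟨k, hk⟩ := hp.pow (n := 2 ^ (n - 1))
  rw [← Nat.two_pow_pred_mul_two (Nat.pos_of_ne_zero hn), pow_mul, hk]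
  ring_nf
  omega

theorem Subgroup.map_conj_centralizer_singleton {G : Type*} [Group G] (t x : G) :
    (centralizer {x}).map (MulAut.conj t).toMonoidHom = centralizer {t * x * t⁻¹} := by
  ext h
  rw [map_equiv_eq_comap_symm']
  simp only [mem_comap, mem_centralizer_singleton_iff]
  rw [← (MulAut.conj t).injective.eq_iff]
  simp [mul_assoc]

theorem IsConj.nonempty_centralizer_mulEquiv {G : Type*} [Group G] {x y : G} (h : IsConj x y) :
    Nonempty (Subgroup.centralizer {x} ≃* Subgroup.centralizer {y}) := by
  obtain ⟨t, rfl⟩ := isConj_iff.1 h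
  exact ⟨(MulEquiv.subgroupMap (MulAut.conj t) _).trans
    (MulEquiv.subgroupCongr (Subgroup.map_conj_centralizer_singleton t x))⟩

namespace Matrix.GeneralLinearGroup

variable {F : Type} [Field F]

def diagFinTwo : Fˣ →* GL (Fin 2) F where
  toFun a := mkOfDetNeZero !![(a : F), 0; 0, 1] (by simp [det_fin_two])
  map_one' := by ext i j; fin_cases i <;> fin_cases j <;> simp
  map_mul' a b := by ext i j; fin_cases i <;> fin_cases j <;> simp

def antidiagFinTwo (a : Fˣ) : GL (Fin 2) F :=
  mkOfDetNeZero !![0, 1; (a : F), 0] (by simp [det_fin_two])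

@[simp]
lemma coe_diagFinTwo (a : Fˣ) :
    (diagFinTwo a : Matrix (Fin 2) (Fin 2) F) = !![(a : F), 0; 0, 1] := rfl

@[simp]
lemma coe_antidiagFinTwo (a : Fˣ) :
    (antidiagFinTwo a : Matrix (Fin 2) (Fin 2) F) = !![0, 1; (a : F), 0] := rfl

lemma antidiagFinTwo_mul_diagFinTwo (a b : Fˣ) :
    antidiagFinTwo a * diagFinTwo b = (antidiagFinTwo (a * b) : GL (Fin 2) F) := by
  ext i j; fin_cases i <;> fin_cases j <;> simp

lemma diagFinTwo_mul_antidiagFinTwo (a b : Fˣ) :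
    diagFinTwo a * antidiagFinTwo b =
      scalar (Fin 2) a * (antidiagFinTwo (b / a) : GL (Fin 2) F) := by
  ext i j; fin_cases i <;> fin_cases j <;> simp [mul_div_cancel₀]

lemma antidiagFinTwo_mul_antidiagFinTwo (a b : Fˣ) :
    antidiagFinTwo a * antidiagFinTwo b =
      scalar (Fin 2) a * (diagFinTwo (b / a) : GL (Fin 2) F) := by
  ext i j; fin_cases i <;> fin_cases j <;> simp [-map_div, mul_div_cancel₀]

lemma antidiagFinTwo_mul_diagFinTwo_neg_one (a : Fˣ) :
    antidiagFinTwo a * diagFinTwo (-1) =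
      scalar (Fin 2) (-1) * (diagFinTwo (-1) * (antidiagFinTwo a : GL (Fin 2) F)) := by
  ext i j; fin_cases i <;> fin_cases j <;> simp

end Matrix.GeneralLinearGroup

namespace ProjectiveGL2

open Matrix.GeneralLinearGroup

variable {F : Type} [Field F]

variable (F) in
abbrev diagInvolution : ProjectiveGL2 F := (diagFinTwo (-1) : GL (Fin 2) F)

lemma coe_eq_one_iff {g : GL (Fin 2) F} :
    (g : ProjectiveGL2 F) = 1 ↔
      (g : Matrix (Fin 2) (Fin 2) F) ∈ Set.range (Matrix.scalar (Fin 2)) := by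
  rw [QuotientGroup.eq_one_iff, mem_center_iff_val_mem_range_scalar]

lemma coe_eq_coe_iff {g h : GL (Fin 2) F} :
    (g : ProjectiveGL2 F) = h ↔ ∃ c : Fˣ, h = scalar (Fin 2) c * g := by
  rw [QuotientGroup.eq, center_eq_range_scalar]
  simp only [MonoidHom.mem_range, eq_comm (b := g⁻¹ * h), inv_mul_eq_iff_eq_mul,
    GeneralLinearGroup.scalar_commute]

@[simp]
lemma coe_scalar_mul (c : Fˣ) (g : GL (Fin 2) F) :
    ((scalar (Fin 2) c * g : GL (Fin 2) F) : ProjectiveGL2 F) = g :=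
  (coe_eq_coe_iff.2 ⟨c, rfl⟩).symm

lemma trace_eq_zero_of_sq_eq_one {g : GL (Fin 2) F} (hsq : (g : ProjectiveGL2 F) ^ 2 = 1)
    (hne : (g : ProjectiveGL2 F) ≠ 1) : trace (g : Matrix (Fin 2) (Fin 2) F) = 0 := by
  rw [← QuotientGroup.mk_pow, coe_eq_one_iff] at hsq
  rw [Ne, coe_eq_one_iff] at hne
  obtain ⟨c, hc⟩ := hsq
  obtain ⟨a, b, c', d, hg⟩ : ∃ a b c' d, (g : Matrix (Fin 2) (Fin 2) F) = !![a, b; c', d] :=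
    ⟨_, _, _, _, eta_fin_two _⟩
  rw [sq, Units.val_mul, hg, mul_fin_two] at hc
  have h00 := congr_fun₂ hc 0 0
  have h01 := congr_fun₂ hc 0 1
  have h10 := congr_fun₂ hc 1 0
  have h11 := congr_fun₂ hc 1 1
  simp only [Fin.isValue, scalar_apply, diagonal_apply_eq, of_apply, cons_val', cons_val_zero,
    cons_val_fin_one, ne_eq, zero_ne_one, not_false_eq_true, diagonal_apply_ne, cons_val_one,
    one_ne_zero] at h00 h01 h10 h11
  rw [hg, trace_fin_two_of]
  by_contra htr
  have hb : b = 0 :=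
    (mul_eq_zero.1 (by linear_combination -h01 : b * (a + d) = 0)).resolve_right htr
  have hc' : c' = 0 :=
    (mul_eq_zero.1 (by linear_combination -h10 : c' * (a + d) = 0)).resolve_right htr
  have had : a = d := sub_eq_zero.1 <|
    (mul_eq_zero.1 (by linear_combination h11 - h00 : (a - d) * (a + d) = 0)).resolve_right htr
  exact hne ⟨a, by rw [hg, hb, hc', had]; exact (eta_fin_two _).trans (by simp)⟩

lemma isConj_of_mul_eq {g t : GL (Fin 2) F} {c : Fˣ}
    (h : g * t = t * (scalar (Fin 2) c * diagFinTwo (-1))) :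
    IsConj (diagInvolution F) g := by
  refine isConj_iff.2 ⟨t, ?_⟩
  rw [diagInvolution, ← coe_scalar_mul c (diagFinTwo (-1)), ← QuotientGroup.mk_inv,
    ← QuotientGroup.mk_mul, ← QuotientGroup.mk_mul, ← h, mul_inv_cancel_right]

lemma isConj_of_trace_eq_zero_of_add_ne_zero (h2 : (2 : F) ≠ 0) {g : GL (Fin 2) F}
    (htr : trace (g : Matrix (Fin 2) (Fin 2) F) = 0) {j : F} (hj0 : j ≠ 0)
    (hj : -det (g : Matrix (Fin 2) (Fin 2) F) = j * j)
    (hgj : (g : Matrix (Fin 2) (Fin 2) F) 0 0 + j ≠ 0) :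
    IsConj (diagInvolution F) g := by
  obtain ⟨a, b, c, d, hg⟩ : ∃ a b c d, (g : Matrix (Fin 2) (Fin 2) F) = !![a, b; c, d] :=
    ⟨_, _, _, _, eta_fin_two _⟩
  rw [hg, trace_fin_two_of] at htr
  rw [hg, det_fin_two_of] at hj
  replace hgj : a + j ≠ 0 := by simpa [hg] using hgj
  -- The columns of this matrix are eigenvectors of `g` for the eigenvalues `j` and `-j`.
  have ht : det !![a + j, b; c, -(a + j)] ≠ 0 := by
    rw [det_fin_two_of]
    have : -(2 * j * (a + j)) ≠ 0 := by simp [h2, hj0, hgj]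
    convert this using 1
    linear_combination -hj - a * htr
  refine isConj_of_mul_eq (t := mkOfDetNeZero _ ht) (c := Units.mk0 (-j) (neg_ne_zero.2 hj0)) ?_
  ext i k
  fin_cases i <;> fin_cases k <;> simp [hg, Matrix.mul_apply, Fin.sum_univ_two]
  · linear_combination a * htr + hj
  · ring
  · linear_combination c * htr
  · linear_combination hj - j * htr

lemma isConj_of_trace_eq_zero (h2 : (2 : F) ≠ 0) {g : GL (Fin 2) F}
    (htr : trace (g : Matrix (Fin 2) (Fin 2) F) = 0)
    (hsq : IsSquare (-det (g : Matrix (Fin 2) (Fin 2) F))) :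
    IsConj (diagInvolution F) g := by
  obtain ⟨j, hj⟩ := hsq
  have hj0 : j ≠ 0 := by
    rintro rfl
    exact ((isUnit_iff_isUnit_det _).1 g.isUnit).ne_zero (by linear_combination -hj)
  by_cases hgj : (g : Matrix (Fin 2) (Fin 2) F) 0 0 + j = 0
  · refine isConj_of_trace_eq_zero_of_add_ne_zero h2 htr (neg_ne_zero.2 hj0)
      (by rw [hj, neg_mul_neg]) ?_
    rw [show (g : Matrix (Fin 2) (Fin 2) F) 0 0 + -j = -(2 * j) by linear_combination hgj]
    simp [h2, hj0]
  · exact isConj_of_trace_eq_zero_of_add_ne_zero h2 htr hj0 hj hgj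

lemma eq_scalar_mul_diagFinTwo_or_antidiagFinTwo (h2 : (2 : F) ≠ 0) {u : GL (Fin 2) F}
    {κ : Fˣ} (h : diagFinTwo (-1) * u = scalar (Fin 2) κ * (u * diagFinTwo (-1))) :
    ∃ s a : Fˣ,
      u = scalar (Fin 2) s * diagFinTwo a ∨ u = scalar (Fin 2) s * antidiagFinTwo a := by
  obtain ⟨a, b, c, d, hu⟩ : ∃ a b c d, (u : Matrix (Fin 2) (Fin 2) F) = !![a, b; c, d] :=
    ⟨_, _, _, _, eta_fin_two _⟩
  have hdet : a * d - b * c ≠ 0 := by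
    rw [← det_fin_two_of, ← hu]
    exact ((isUnit_iff_isUnit_det _).1 u.isUnit).ne_zero
  have hval := congr_arg Units.val h
  simp only [Units.val_mul, coe_diagFinTwo, coe_scalar, hu, mul_fin_two] at hval
  have h00 := congr_fun₂ hval 0 0
  have h01 := congr_fun₂ hval 0 1
  have h10 := congr_fun₂ hval 1 0
  have h11 := congr_fun₂ hval 1 1
  simp only [Units.val_neg, Units.val_one, neg_mul, one_mul, zero_mul, add_zero, zero_add,
    Fin.isValue, of_apply, cons_val', cons_val_zero, cons_val_fin_one, scalar_apply, mul_neg,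
    mul_one, mul_zero, diagonal_mul, neg_inj, cons_val_one] at h00 h01 h10 h11
  rcases eq_or_ne a 0 with ha | ha
  · have hb : b ≠ 0 := by rintro rfl; simp [ha] at hdet
    have hc : c ≠ 0 := by rintro rfl; simp [ha] at hdet
    have hκ : (κ : F) = -1 := mul_right_cancel₀ hb (by linear_combination -h01)
    have hd : d = 0 :=
      (mul_eq_zero.1 (by linear_combination h11 + d * hκ : 2 * d = 0)).resolve_left h2
    refine ⟨Units.mk0 b hb, Units.mk0 (c / b) (div_ne_zero hc hb), Or.inr ?_⟩
    ext i j; fin_cases i <;> fin_cases j <;> simp [hu, ha, hd, mul_div_cancel₀ _ hb]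
  · have hκ : (κ : F) = 1 := mul_right_cancel₀ ha (by linear_combination -h00)
    have hb : b = 0 :=
      (mul_eq_zero.1 (by linear_combination -h01 - b * hκ : 2 * b = 0)).resolve_left h2
    have hc : c = 0 :=
      (mul_eq_zero.1 (by linear_combination h10 - c * hκ : 2 * c = 0)).resolve_left h2
    have hd : d ≠ 0 := by rintro rfl; simp [hb] at hdet
    refine ⟨Units.mk0 d hd, Units.mk0 (a / d) (div_ne_zero ha hd), Or.inl ?_⟩
    ext i j; fin_cases i <;> fin_cases j <;> simp [hu, hb, hc, mul_div_cancel₀ _ hd]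

section Dihedral

variable {m : ℕ} (φ : Multiplicative (ZMod m) →* Fˣ)

def ofDihedral : DihedralGroup m →* ProjectiveGL2 F where
  toFun
    | .r i => (diagFinTwo (φ (.ofAdd i)) : GL (Fin 2) F)
    | .sr i => (antidiagFinTwo (φ (.ofAdd i)) : GL (Fin 2) F)
  map_one' := by
    change ((diagFinTwo (φ (.ofAdd 0)) : GL (Fin 2) F) : ProjectiveGL2 F) = 1
    simp
  map_mul' := by
    rintro (i | i) (j | j) <;>
      simp [DihedralGroup.r_mul_r, DihedralGroup.r_mul_sr, DihedralGroup.sr_mul_r,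
        DihedralGroup.sr_mul_sr, ← QuotientGroup.mk_mul, diagFinTwo_mul_antidiagFinTwo,
        antidiagFinTwo_mul_diagFinTwo, antidiagFinTwo_mul_antidiagFinTwo]

variable {φ}

lemma ofDihedral_injective (hφ : Function.Injective φ) :
    Function.Injective (ofDihedral (F := F) φ) := by
  refine (injective_iff_map_eq_one _).2 ?_
  rintro (i | i) h <;> obtain ⟨c, hc⟩ := coe_eq_one_iff.1 h
  · have h00 := congr_fun₂ hc 0 0
    have h11 := congr_fun₂ hc 1 1
    simp only [Fin.isValue, scalar_apply, diagonal_apply_eq, coe_diagFinTwo, of_apply, cons_val',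
      cons_val_zero, cons_val_fin_one, cons_val_one] at h00 h11
    have hi : Multiplicative.ofAdd i = 1 := hφ (Units.ext (by simp [← h00, h11]))
    rw [ofAdd_eq_one.1 hi, DihedralGroup.r_zero]
  · simpa using congr_fun₂ hc 0 1

lemma range_ofDihedral (h2 : (2 : F) ≠ 0) (hφ : Function.Surjective φ) :
    (ofDihedral φ).range = Subgroup.centralizer {diagInvolution F} := by
  apply le_antisymm
  · rintro _ ⟨i | i, rfl⟩ <;> rw [Subgroup.mem_centralizer_singleton_iff]
    · simp [ofDihedral, ← QuotientGroup.mk_mul, ← map_mul, mul_comm]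
    · simp [ofDihedral, ← QuotientGroup.mk_mul, antidiagFinTwo_mul_diagFinTwo_neg_one]
  · intro x hx
    obtain ⟨u, rfl⟩ := QuotientGroup.mk_surjective x
    rw [Subgroup.mem_centralizer_singleton_iff, ← QuotientGroup.mk_mul, ← QuotientGroup.mk_mul,
      coe_eq_coe_iff] at hx
    obtain ⟨κ, hκ⟩ := hx
    obtain ⟨s, a, rfl | rfl⟩ := eq_scalar_mul_diagFinTwo_or_antidiagFinTwo h2 hκ <;>
      obtain ⟨i, rfl⟩ := hφ a
    · exact ⟨.r (Multiplicative.toAdd i), (coe_scalar_mul s _).symm⟩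
    · exact ⟨.sr (Multiplicative.toAdd i), (coe_scalar_mul s _).symm⟩

lemma nonempty_centralizer_mulEquiv_dihedralGroup [Finite F] (h2 : (2 : F) ≠ 0) :
    Nonempty (Subgroup.centralizer {diagInvolution F} ≃* DihedralGroup (Nat.card Fˣ)) :=
  let φ := zmodCyclicMulEquiv (inferInstance : IsCyclic Fˣ)
  ⟨((MonoidHom.ofInjective (ofDihedral_injective φ.injective)).trans
    (MulEquiv.subgroupCongr (range_ofDihedral h2 φ.surjective))).symm⟩

end Dihedral

end ProjectiveGL2

theorem centralizer_inner_involution_isDihedral_general (p n : ℕ) (hodd : Odd p) (hn : 1 ≤ n)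
    (F : Type) [Field F] [Fintype F] (hF : Fintype.card F = p ^ 2 ^ n)
    (y : ProjectiveGL2 F) (hy : orderOf y = 2) (hyS : y ∈ socleSL2 F) :
    Nonempty (Subgroup.centralizer {y} ≃* DihedralGroup (p ^ 2 ^ n - 1)) := by
  have hq : Fintype.card F % 4 = 1 := hF ▸ Nat.pow_two_pow_mod_four_of_odd hodd (by omega)
  have h2 : (2 : F) ≠ 0 := Ring.two_ne_zero fun h ↦ by
    have := FiniteField.even_card_iff_char_two.1 h
    omega
  have hy2 : y ^ 2 = 1 := by simpa [hy] using pow_orderOf_eq_one y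
  have hy1 : y ≠ 1 := by rintro rfl; simp at hy
  obtain ⟨S, rfl⟩ := hyS
  have htr := ProjectiveGL2.trace_eq_zero_of_sq_eq_one (g := SpecialLinearGroup.toGL S) hy2 hy1
  have hconj := ProjectiveGL2.isConj_of_trace_eq_zero h2 htr
    (by simpa using FiniteField.isSquare_neg_one_iff.2 (by omega))
  obtain ⟨e₁⟩ := hconj.nonempty_centralizer_mulEquiv
  obtain ⟨e₂⟩ := ProjectiveGL2.nonempty_centralizer_mulEquiv_dihedralGroup h2
  rw [Nat.card_units, Nat.card_eq_fintype_card, hF] at e₂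
  exact ⟨e₁.symm.trans e₂⟩

/-- The centralizer of an inner involution of `PGL₂(q)`, `q = p^(2^n)`, is dihedral
of order `2(q-1)`. -/
theorem centralizer_inner_involution_isDihedral (p n : ℕ) (hp : Nat.Prime p) (hodd : Odd p) (hn : 1 ≤ n)
    (F : Type) [Field F] [Fintype F] (hF : Fintype.card F = p ^ 2 ^ n)
    (y : ProjectiveGL2 F) (hy : orderOf y = 2) (hyS : y ∈ socleSL2 F) :
    Nonempty (Subgroup.centralizer {y} ≃* DihedralGroup (p ^ 2 ^ n - 1)) :=
  centralizer_inner_involution_isDihedral_general p n hodd hn F hF y hy hyS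
end

section
/- Let p be an odd prime, n ≥ 1, q = p^(2^n), and G = PGL₂(F_q). If C₁ and C₂ are distinct cyclic subgroups of G, each of order q−1 or of order q+1, then C₁ ∩ C₂ is the trivial subgroup. (Equivalently, the rotation subgroups of any two distinct maximal dihedral subgroups of G intersect trivially.) -/
open Matrix

namespace PGLAux

variable {F : Type} [Field F]

lemma sq_of_trace_zero (B : Matrix (Fin 2) (Fin 2) F) (h : B.trace = 0) :
    B * B = (-B.det) • 1 := by
  have h' : B 0 0 + B 1 1 = 0 := by rw [Matrix.trace_fin_two] at h; exact h
  rw [Matrix.eta_fin_two B]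
  rw [Matrix.det_fin_two, Matrix.mul_fin_two, Matrix.one_fin_two]
  simp only [Matrix.smul_of]
  congr 1
  ext i j
  fin_cases i <;> fin_cases j <;> simp <;>
    first
      | linear_combination B 0 0 * h'
      | linear_combination B 0 1 * h'
      | linear_combination B 1 0 * h'
      | linear_combination B 1 1 * h'

lemma commutant {A B : Matrix (Fin 2) (Fin 2) F} (hA : ∀ c : F, A ≠ c • 1)
    (h : A * B = B * A) : ∃ ab : F × F, B = ab.1 • 1 + ab.2 • A := by
  set a := A 0 0 with ha'; set b := A 0 1 with hb'; set c := A 1 0 with hc'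
  set d := A 1 1 with hd'
  set e := B 0 0; set f := B 0 1; set g := B 1 0; set k := B 1 1
  have h00 : b * g = c * f := by
    have := congrFun (congrFun h 0) 0
    simp [Matrix.mul_apply, Fin.sum_univ_two] at this
    linear_combination this
  have h01 : f * (a - d) = b * (e - k) := by
    have := congrFun (congrFun h 0) 1
    simp [Matrix.mul_apply, Fin.sum_univ_two] at this
    linear_combination this
  have h10 : c * (e - k) = g * (a - d) := by
    have := congrFun (congrFun h 1) 0
    simp [Matrix.mul_apply, Fin.sum_univ_two] at this
    linear_combination this
  have ent : ∀ α β : F, e = α + β * a → f = β * b → g = β * c → k = α + β * d →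
      B = α • 1 + β • A := by
    intro α β he hf hg hk
    ext i j
    fin_cases i <;> fin_cases j <;>
      simp [Matrix.one_apply] <;> first | exact he | exact hf | exact hg | exact hk
  by_cases hb : b ≠ 0
  · refine ⟨(e - a * (f / b), f / b), ent _ _ (by field_simp; ring) (by field_simp) ?_ ?_⟩
    · field_simp
      first | linear_combination h00 | linear_combination -h00 | linear_combination 2 * h00 |
        linear_combination -2 * h00
    · field_simp
      first | linear_combination h01 | linear_combination -h01 | linear_combination 2 * h01 |
        linear_combination -2 * h01
  push_neg at hb
  by_cases hc : c ≠ 0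
  · refine ⟨(e - a * (g / c), g / c), ent _ _ (by field_simp; ring) ?_ (by field_simp) ?_⟩
    · field_simp
      first | linear_combination h00 | linear_combination -h00 | linear_combination 2 * h00 |
        linear_combination -2 * h00
    · field_simp
      first | linear_combination h10 | linear_combination -h10 | linear_combination 2 * h10 |
        linear_combination -2 * h10
  push_neg at hc
  by_cases had : a = d
  · refine absurd ?_ (hA d)
    have hAe : A = !![a, b; c, d] := Matrix.eta_fin_two A
    rw [hAe, hb, hc, had, Matrix.one_fin_two]
    ext i j; fin_cases i <;> fin_cases j <;> simp
  · have hsub : a - d ≠ 0 := sub_ne_zero.mpr had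
    have hf0 : f = 0 := by
      rw [hb, zero_mul] at h01
      rcases mul_eq_zero.mp h01 with h' | h'
      · exact h'
      · exact absurd (sub_eq_zero.mp h') had
    have hg0 : g = 0 := by
      rw [hc, zero_mul] at h10
      rcases mul_eq_zero.mp h10.symm with h' | h'
      · exact h'
      · exact absurd (sub_eq_zero.mp h') had
    refine ⟨(e - a * ((e - k) / (a - d)), (e - k) / (a - d)), ent _ _ ?_ ?_ ?_ ?_⟩
    · field_simp; ring
    · rw [hb, mul_zero]; exact hf0
    · rw [hc, mul_zero]; exact hg0
    · field_simp; ring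

/-- the scalar unit `u • 1` as an element of `GL₂`. -/
def scalarGL (u : Fˣ) : Matrix.GeneralLinearGroup (Fin 2) F :=
  Units.map (algebraMap F (Matrix (Fin 2) (Fin 2) F)).toMonoidHom u

lemma scalarGL_val (u : Fˣ) : (scalarGL u : Matrix (Fin 2) (Fin 2) F) = (u : F) • 1 := by
  simp [scalarGL, Algebra.algebraMap_eq_smul_one]

lemma mem_center_of_scalar_val {Z : Matrix.GeneralLinearGroup (Fin 2) F} {c : F}
    (h : (Z : Matrix (Fin 2) (Fin 2) F) = c • 1) :
    Z ∈ Subgroup.center (Matrix.GeneralLinearGroup (Fin 2) F) := by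
  rw [Subgroup.mem_center_iff]
  intro g
  refine Units.ext ?_
  rw [Units.val_mul, Units.val_mul, h, mul_smul_comm, smul_mul_assoc, mul_one, one_mul]

lemma scalarGL_mem_center (u : Fˣ) :
    scalarGL u ∈ Subgroup.center (Matrix.GeneralLinearGroup (Fin 2) F) :=
  mem_center_of_scalar_val (scalarGL_val u)

lemma exists_scalar_of_mem_center {Z : Matrix.GeneralLinearGroup (Fin 2) F}
    (h : Z ∈ Subgroup.center (Matrix.GeneralLinearGroup (Fin 2) F)) :
    ∃ c : F, (Z : Matrix (Fin 2) (Fin 2) F) = c • 1 := by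
  rw [Subgroup.mem_center_iff] at h
  have hE : (!![1, 1; 0, 1] : Matrix (Fin 2) (Fin 2) F) * !![1, -1; 0, 1] = 1 ∧
      (!![1, -1; 0, 1] : Matrix (Fin 2) (Fin 2) F) * !![1, 1; 0, 1] = 1 := by
    constructor <;> (rw [Matrix.mul_fin_two, Matrix.one_fin_two]; norm_num)
  have hE' : (!![1, 0; 1, 1] : Matrix (Fin 2) (Fin 2) F) * !![1, 0; -1, 1] = 1 ∧
      (!![1, 0; -1, 1] : Matrix (Fin 2) (Fin 2) F) * !![1, 0; 1, 1] = 1 := by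
    constructor <;> (rw [Matrix.mul_fin_two, Matrix.one_fin_two]; norm_num)
  set E : Matrix.GeneralLinearGroup (Fin 2) F := ⟨!![1, 1; 0, 1], !![1, -1; 0, 1], hE.1, hE.2⟩
  set E' : Matrix.GeneralLinearGroup (Fin 2) F := ⟨!![1, 0; 1, 1], !![1, 0; -1, 1], hE'.1, hE'.2⟩
  have c1 : (E : Matrix (Fin 2) (Fin 2) F) * Z = (Z : Matrix (Fin 2) (Fin 2) F) * E :=
    congrArg Units.val (h E)
  have c2 : (E' : Matrix (Fin 2) (Fin 2) F) * Z = (Z : Matrix (Fin 2) (Fin 2) F) * E' :=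
    congrArg Units.val (h E')
  set M : Matrix (Fin 2) (Fin 2) F := (Z : Matrix (Fin 2) (Fin 2) F)
  have e10 : M 1 0 = 0 := by
    have := congrFun (congrFun c1 0) 0
    simp [E, Matrix.mul_apply, Fin.sum_univ_two] at this
    first | linear_combination this | linear_combination -this
  have e01 : M 0 1 = 0 := by
    have := congrFun (congrFun c2 0) 0
    simp [E', Matrix.mul_apply, Fin.sum_univ_two] at this
    first | linear_combination this | linear_combination -this
  have e11 : M 1 1 = M 0 0 := by
    have := congrFun (congrFun c1 0) 1
    simp [E, Matrix.mul_apply, Fin.sum_univ_two] at this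
    first | linear_combination this | linear_combination -this | linear_combination this - e10 | linear_combination e10 - this | linear_combination this + e10 | linear_combination -this - e10
  refine ⟨M 0 0, ?_⟩
  show M = _
  rw [Matrix.eta_fin_two M, e10, e01, e11, Matrix.one_fin_two]
  ext i j; fin_cases i <;> fin_cases j <;> simp

end PGLAux

namespace PGLAux

lemma key (F : Type) [Field F] [Fintype F] (h2 : (2 : F) ≠ 0) (g : ProjectiveGL2 F) (hg : g ≠ 1) :
    ∃ T : Subgroup (ProjectiveGL2 F),
      Nat.card T * (Nat.card F - 1) ≤ Nat.card F * Nat.card F ∧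
      ∀ x : ProjectiveGL2 F, Commute x g → 3 ≤ orderOf x → x ∈ T := by
  classical
  set Z := Subgroup.center (Matrix.GeneralLinearGroup (Fin 2) F)
  set π := QuotientGroup.mk' Z with hπ
  obtain ⟨A, rfl⟩ := QuotientGroup.mk'_surjective Z g
  have hA : ∀ c : F, (A : Matrix (Fin 2) (Fin 2) F) ≠ c • 1 := by
    intro c hc
    exact hg ((QuotientGroup.eq_one_iff A).mpr (mem_center_of_scalar_val hc))
  set C : Subgroup (Matrix.GeneralLinearGroup (Fin 2) F) := Subgroup.centralizer {A}
  set φ : C →* ProjectiveGL2 F := π.comp C.subtype with hφ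
  refine ⟨φ.range, ?_, ?_⟩
  · -- cardinality bound
    have hCcard : Nat.card C ≤ Nat.card F * Nat.card F := by
      have hfun : ∀ B : C, ∃ ab : F × F,
          ((B : Matrix.GeneralLinearGroup (Fin 2) F) : Matrix (Fin 2) (Fin 2) F) =
            ab.1 • 1 + ab.2 • A := by
        intro B
        have hBA : (A : Matrix (Fin 2) (Fin 2) F) *
            ((B : Matrix.GeneralLinearGroup (Fin 2) F) : Matrix (Fin 2) (Fin 2) F) =
            ((B : Matrix.GeneralLinearGroup (Fin 2) F) : Matrix (Fin 2) (Fin 2) F) * A := by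
          have := B.2 A (Set.mem_singleton A)
          exact congrArg Units.val this
        exact commutant hA hBA
      have hinj : Function.Injective (fun B : C => (hfun B).choose) := by
        intro B₁ B₂ hB
        have hB' : (hfun B₁).choose = (hfun B₂).choose := hB
        have s1 := (hfun B₁).choose_spec
        have s2 := (hfun B₂).choose_spec
        apply Subtype.ext
        apply Units.ext
        rw [s1, s2, hB']
      calc Nat.card C ≤ Nat.card (F × F) := Nat.card_le_card_of_injective _ hinj
        _ = Nat.card F * Nat.card F := Nat.card_prod F F
    have hker : Nat.card F - 1 ≤ Nat.card (φ.ker) := by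
      have hmemC : ∀ u : Fˣ, scalarGL u ∈ C := by
        intro u
        rw [Subgroup.mem_centralizer_iff]
        intro h hh
        rw [Set.mem_singleton_iff] at hh
        subst hh
        apply Units.ext
        rw [Units.val_mul, Units.val_mul, scalarGL_val, mul_smul_comm, smul_mul_assoc,
          mul_one, one_mul]
      have hmemK : ∀ u : Fˣ, (⟨scalarGL u, hmemC u⟩ : C) ∈ φ.ker := by
        intro u
        show π (scalarGL u) = 1
        exact (QuotientGroup.eq_one_iff _).mpr (scalarGL_mem_center u)
      have hinj : Function.Injective (fun u : Fˣ => (⟨⟨scalarGL u, hmemC u⟩, hmemK u⟩ : φ.ker)) := by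
        intro u v huv
        have : (scalarGL u : Matrix (Fin 2) (Fin 2) F) = scalarGL v := by
          have h' : (⟨⟨scalarGL u, hmemC u⟩, hmemK u⟩ : φ.ker) = ⟨⟨scalarGL v, hmemC v⟩, hmemK v⟩ :=
            huv
          have h'' := congrArg (fun w : φ.ker => ((w : C) : Matrix.GeneralLinearGroup (Fin 2) F)) h'
          exact congrArg Units.val h''
        rw [scalarGL_val, scalarGL_val] at this
        have := congrFun (congrFun this 0) 0
        simp [Matrix.one_apply] at this
        exact Units.ext this
      calc Nat.card F - 1 = Nat.card Fˣ := (Nat.card_units F).symm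
        _ ≤ Nat.card φ.ker := Nat.card_le_card_of_injective _ hinj
    have hquot : Nat.card φ.range * Nat.card φ.ker = Nat.card C := by
      rw [← Nat.card_congr (QuotientGroup.quotientKerEquivRange φ).toEquiv]
      exact (Subgroup.card_eq_card_quotient_mul_card_subgroup φ.ker).symm
    calc Nat.card φ.range * (Nat.card F - 1) ≤ Nat.card φ.range * Nat.card φ.ker :=
          Nat.mul_le_mul_left _ hker
      _ = Nat.card C := hquot
      _ ≤ Nat.card F * Nat.card F := hCcard
  · -- membership
    intro x hx hord
    obtain ⟨B, rfl⟩ := QuotientGroup.mk'_surjective Z x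
    have hBA : π (B * A) = π (A * B) := by
      rw [_root_.map_mul, _root_.map_mul]; exact hx
    have hcen : (B * A) * (A * B)⁻¹ ∈ Z := by
      have : π ((B * A) * (A * B)⁻¹) = 1 := by
        rw [_root_.map_mul, _root_.map_inv, hBA, mul_inv_cancel]
      exact (QuotientGroup.eq_one_iff _).mp this
    obtain ⟨c, hc⟩ := exists_scalar_of_mem_center hcen
    set Am : Matrix (Fin 2) (Fin 2) F := (A : Matrix (Fin 2) (Fin 2) F) with hAm
    set Bm : Matrix (Fin 2) (Fin 2) F := (B : Matrix (Fin 2) (Fin 2) F) with hBm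
    have key1 : ((B * A : Matrix.GeneralLinearGroup (Fin 2) F) : Matrix (Fin 2) (Fin 2) F) =
        (((B * A) * (A * B)⁻¹ : Matrix.GeneralLinearGroup (Fin 2) F) : Matrix (Fin 2) (Fin 2) F) *
        ((A * B : Matrix.GeneralLinearGroup (Fin 2) F) : Matrix (Fin 2) (Fin 2) F) := by
      rw [← Units.val_mul]
      congr 1
      rw [mul_assoc, inv_mul_cancel, mul_one]
    have hmat : Bm * Am = c • (Am * Bm) := by
      have : ((B * A : Matrix.GeneralLinearGroup (Fin 2) F) : Matrix (Fin 2) (Fin 2) F) =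
          (c • (1 : Matrix (Fin 2) (Fin 2) F)) *
          ((A * B : Matrix.GeneralLinearGroup (Fin 2) F) : Matrix (Fin 2) (Fin 2) F) := by
        rw [key1, hc]
      rw [Units.val_mul, Units.val_mul] at this
      rw [this, smul_mul_assoc, one_mul]
    have hDne : (Am * Bm).det ≠ 0 := by
      have hu : IsUnit (Am * Bm) := by
        rw [← Units.val_mul]; exact Units.isUnit _
      exact ((Matrix.isUnit_iff_isUnit_det _).mp hu).ne_zero
    have hc2 : c ^ 2 = 1 := by
      have hdet : (Bm * Am).det = c ^ 2 * (Am * Bm).det := by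
        rw [hmat, Matrix.det_smul]
        norm_num
      rw [Matrix.det_mul, mul_comm, ← Matrix.det_mul] at hdet
      have := mul_right_cancel₀ hDne (by rw [← hdet, one_mul] : c ^ 2 * (Am * Bm).det =
        1 * (Am * Bm).det)
      exact this
    have hcc : (c - 1) * (c + 1) = 0 := by linear_combination hc2
    rcases mul_eq_zero.mp hcc with hc1 | hc1
    · -- c = 1 : B centralizes A
      have hc1 : c = 1 := by linear_combination hc1
      have hBmem : B ∈ C := by
        rw [Subgroup.mem_centralizer_iff]
        intro h hh
        rw [Set.mem_singleton_iff] at hh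
        subst hh
        apply Units.ext
        rw [Units.val_mul, Units.val_mul]
        rw [hc1, one_smul] at hmat
        exact hmat.symm
      exact ⟨⟨B, hBmem⟩, rfl⟩
    · -- c = -1 : B has order ≤ 2, contradiction
      exfalso
      have hc1 : c = -1 := by linear_combination hc1
      have hm : Bm * Am = -(Am * Bm) := by rw [hmat, hc1, neg_one_smul]
      set Mi : Matrix (Fin 2) (Fin 2) F := ((A⁻¹ : Matrix.GeneralLinearGroup (Fin 2) F) :
        Matrix (Fin 2) (Fin 2) F) with hMi
      have hAMi : Am * Mi = 1 := by
        rw [hAm, hMi, ← Units.val_mul, mul_inv_cancel, Units.val_one]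
      have hMiA : Mi * Am = 1 := by
        rw [hAm, hMi, ← Units.val_mul, inv_mul_cancel, Units.val_one]
      have htr : Bm.trace = - Bm.trace := by
        calc Bm.trace = (Bm * (Am * Mi)).trace := by rw [hAMi, mul_one]
          _ = ((Bm * Am) * Mi).trace := by rw [mul_assoc]
          _ = (-(Am * Bm) * Mi).trace := by rw [hm]
          _ = -((Am * Bm) * Mi).trace := by rw [neg_mul, Matrix.trace_neg]
          _ = -(Mi * (Am * Bm)).trace := by rw [Matrix.trace_mul_comm]
          _ = -((Mi * Am) * Bm).trace := by rw [mul_assoc]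
          _ = - Bm.trace := by rw [hMiA, one_mul]
      have htr0 : Bm.trace = 0 := by
        have h' : (2 : F) * Bm.trace = 0 := by linear_combination htr
        rcases mul_eq_zero.mp h' with h'' | h''
        · exact absurd h'' h2
        · exact h''
      have hsq : Bm * Bm = (-Bm.det) • 1 := sq_of_trace_zero Bm htr0
      have hBB : (B * B : Matrix.GeneralLinearGroup (Fin 2) F) ∈ Z :=
        mem_center_of_scalar_val (by rw [Units.val_mul]; exact hsq)
      have hx2 : (π B) ^ 2 = 1 := by
        rw [← _root_.map_pow, pow_two]
        exact (QuotientGroup.eq_one_iff _).mpr hBB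
      have hle : orderOf (π B) ≤ 2 :=
        Nat.le_of_dvd (by norm_num) (orderOf_dvd_of_pow_eq_one hx2)
      exact absurd (le_trans hord hle) (by norm_num)

end PGLAux

/-- Two distinct cyclic subgroups of `PGL₂(q)`, each of order `q-1` or `q+1`,
intersect trivially. -/
theorem distinct_maximal_tori_inter_trivial (p n : ℕ) (hp : Nat.Prime p) (hodd : Odd p) (hn : 1 ≤ n)
    (F : Type) [Field F] [Fintype F] (hF : Fintype.card F = p ^ 2 ^ n)
    (C₁ C₂ : Subgroup (ProjectiveGL2 F)) (h₁ : IsCyclic C₁) (h₂ : IsCyclic C₂)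
    (hc₁ : Nat.card C₁ = p ^ 2 ^ n - 1 ∨ Nat.card C₁ = p ^ 2 ^ n + 1)
    (hc₂ : Nat.card C₂ = p ^ 2 ^ n - 1 ∨ Nat.card C₂ = p ^ 2 ^ n + 1)
    (hne : C₁ ≠ C₂) :
    C₁ ⊓ C₂ = ⊥ := by
  classical
  set q := p ^ 2 ^ n with hq
  have hp3 : 3 ≤ p := by
    have := hp.two_le
    rcases Nat.lt_or_ge p 3 with h | h
    · interval_cases p
      · exact absurd hodd (by decide)
    · exact h
  have hq9 : 9 ≤ q := by
    have h2n : 2 ≤ 2 ^ n := by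
      calc 2 = 2 ^ 1 := rfl
        _ ≤ 2 ^ n := Nat.pow_le_pow_right (by norm_num) hn
    calc 9 = 3 ^ 2 := rfl
      _ ≤ p ^ 2 := Nat.pow_le_pow_left hp3 2
      _ ≤ p ^ 2 ^ n := Nat.pow_le_pow_right (by omega) h2n
  have hcardF : Nat.card F = q := by rw [Nat.card_eq_fintype_card, hF]
  have h2 : (2 : F) ≠ 0 := by
    intro h20
    set r := ringChar F with hr
    have hrp : r.Prime := CharP.char_is_prime F r
    obtain ⟨m, hm⟩ := FiniteField.card F r
    have hrq : r ∣ q := by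
      rw [← hF, hm.2]
      exact dvd_pow_self r (by positivity)
    have hrP : r = p := by
      have := hrp.dvd_of_dvd_pow (hq ▸ hrq : r ∣ p ^ 2 ^ n)
      exact ((Nat.prime_dvd_prime_iff_eq hrp hp).mp this)
    have : r ∣ 2 := (CharP.cast_eq_zero_iff F r 2).mp h20
    rw [hrP] at this
    have := Nat.le_of_dvd (by norm_num) this
    omega
  haveI : Finite (ProjectiveGL2 F) := Quotient.finite _
  rw [Subgroup.eq_bot_iff_forall]
  intro g hg
  by_contra hg1
  obtain ⟨T, hTcard, hT⟩ := PGLAux.key F h2 g hg1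
  rw [hcardF] at hTcard
  have hTle : Nat.card T ≤ q + 1 := by
    by_contra hcon
    push_neg at hcon
    have h1 : (q + 2) * (q - 1) ≤ Nat.card T * (q - 1) := Nat.mul_le_mul_right _ (by omega)
    obtain ⟨k, hk⟩ : ∃ k, q = k + 1 := ⟨q - 1, by omega⟩
    have h2' : (q + 2) * (q - 1) ≤ q * q := le_trans h1 hTcard
    rw [hk] at h2'
    simp only [Nat.add_sub_cancel] at h2'
    nlinarith [h2']
  have main : ∀ C : Subgroup (ProjectiveGL2 F), IsCyclic C →
      (Nat.card C = q - 1 ∨ Nat.card C = q + 1) → g ∈ C → C = T := by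
    intro C hC hcC hgC
    obtain ⟨x, hx⟩ := hC.exists_generator
    have hzp : Subgroup.zpowers (x : ProjectiveGL2 F) = C := by
      have htop : Subgroup.zpowers x = (⊤ : Subgroup C) := by
        rw [Subgroup.eq_top_iff']
        exact hx
      calc Subgroup.zpowers (x : ProjectiveGL2 F)
          = (Subgroup.zpowers x).map C.subtype := (MonoidHom.map_zpowers C.subtype x).symm
        _ = (⊤ : Subgroup C).map C.subtype := by rw [htop]
        _ = C := by rw [← MonoidHom.range_eq_map, Subgroup.range_subtype]
    have hord : orderOf (x : ProjectiveGL2 F) = Nat.card C := by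
      rw [← Nat.card_zpowers, hzp]
    have hcomm : Commute (x : ProjectiveGL2 F) g := by
      obtain ⟨m, hm⟩ := Subgroup.mem_zpowers_iff.mp (hzp ▸ hgC)
      rw [← hm]
      exact (Commute.refl _).zpow_right m
    have hxT : (x : ProjectiveGL2 F) ∈ T := by
      refine hT _ hcomm ?_
      rw [hord]
      rcases hcC with h | h <;> omega
    have hle : C ≤ T := by
      rw [← hzp]
      exact Subgroup.zpowers_le.mpr hxT
    have hdvd : Nat.card C ∣ Nat.card T := Subgroup.card_dvd_of_le hle
    have hpos : 0 < Nat.card T := Nat.card_pos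
    obtain ⟨s, hs⟩ := hdvd
    have hcTle : Nat.card T ≤ Nat.card C := by
      rcases hcC with h | h <;> rw [h] at hs ⊢
      · rcases s with _ | _ | s
        · omega
        · omega
        · have h2s : (q - 1) * 2 ≤ Nat.card T := by
            rw [hs]; exact Nat.mul_le_mul_left _ (by omega)
          omega
      · rcases s with _ | _ | s
        · omega
        · omega
        · have h2s : (q + 1) * 2 ≤ Nat.card T := by
            rw [hs]; exact Nat.mul_le_mul_left _ (by omega)
          omega
    exact Subgroup.eq_of_le_of_card_ge hle hcTle
  obtain ⟨hgC₁, hgC₂⟩ := Subgroup.mem_inf.mp hg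
  exact absurd ((main C₁ h₁ hc₁ hgC₁).trans (main C₂ h₂ hc₂ hgC₂).symm) hne
end

section
/- Let p be an odd prime, n ≥ 1, q = p^(2^n), and G = PGL₂(F_q). Fix an involution x ∈ G not lying in the image S of SL₂(F_q) in G. Then every Klein four-subgroup of G containing x contains exactly one involution lying in S and exactly two involutions (including x) outside S; i.e., every such subgroup has type 2A₁B₂. -/
open Matrix

section Aux

variable {F : Type} [Field F]

/-- In a finite field, the product of two nonsquares is a square. -/
lemma aux_nonsq_mul [Fintype F] {a b : F} (ha : ¬ IsSquare a) (hb : ¬ IsSquare b) :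
    IsSquare (a * b) := by
  classical
  have ha0 : a ≠ 0 := by rintro rfl; exact ha ⟨0, by ring⟩
  have hb0 : b ≠ 0 := by rintro rfl; exact hb ⟨0, by ring⟩
  have h : quadraticChar F (a * b) = 1 := by
    rw [_root_.map_mul, quadraticChar_neg_one_iff_not_isSquare.mpr ha,
      quadraticChar_neg_one_iff_not_isSquare.mpr hb]
    ring
  exact (quadraticChar_one_iff_isSquare (mul_ne_zero ha0 hb0)).mp h

/-- An element of the center of `GL₂` has square determinant. -/
lemma aux_center_det_isSquare (z : Matrix.GeneralLinearGroup (Fin 2) F)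
    (hz : z ∈ Subgroup.center (Matrix.GeneralLinearGroup (Fin 2) F)) :
    IsSquare ((z : Matrix (Fin 2) (Fin 2) F).det) := by
  set M : Matrix (Fin 2) (Fin 2) F := (z : Matrix (Fin 2) (Fin 2) F) with hM
  have hu : (!![1, 1; 0, 1] : Matrix (Fin 2) (Fin 2) F) * !![1, -1; 0, 1] = 1 := by
    rw [Matrix.mul_fin_two, Matrix.one_fin_two]; norm_num
  have hu' : (!![1, -1; 0, 1] : Matrix (Fin 2) (Fin 2) F) * !![1, 1; 0, 1] = 1 := by
    rw [Matrix.mul_fin_two, Matrix.one_fin_two]; norm_num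
  set u : Matrix.GeneralLinearGroup (Fin 2) F := ⟨!![1, 1; 0, 1], !![1, -1; 0, 1], hu, hu'⟩ with hudef
  have hcom : u * z = z * u := (Subgroup.mem_center_iff.mp hz u)
  have hval : (!![1, 1; 0, 1] : Matrix (Fin 2) (Fin 2) F) * M = M * !![1, 1; 0, 1] := by
    have := congrArg Units.val hcom
    simpa [hudef, Units.val_mul] using this
  have h10 : M 1 0 = 0 := by
    have := congrFun (congrFun hval 0) 0
    simp [Matrix.mul_apply, Fin.sum_univ_two] at this
    linear_combination this
  have h0011 : M 0 0 = M 1 1 := by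
    have := congrFun (congrFun hval 0) 1
    simp [Matrix.mul_apply, Fin.sum_univ_two] at this
    linear_combination -this
  refine ⟨M 0 0, ?_⟩
  rw [Matrix.det_fin_two, h10, h0011]
  ring

/-- Membership in the socle is detected by squareness of the determinant. -/
lemma aux_mem_socle_iff (A : Matrix.GeneralLinearGroup (Fin 2) F) :
    (QuotientGroup.mk A : ProjectiveGL2 F) ∈ socleSL2 F ↔
      IsSquare ((A : Matrix (Fin 2) (Fin 2) F).det) := by
  constructor
  · rintro ⟨s, hs⟩
    have hmem : (Matrix.SpecialLinearGroup.toGL s)⁻¹ * A ∈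
        Subgroup.center (Matrix.GeneralLinearGroup (Fin 2) F) := by
      rw [← QuotientGroup.eq]
      exact hs
    have hsq := aux_center_det_isSquare _ hmem
    have heq : Matrix.SpecialLinearGroup.toGL s * ((Matrix.SpecialLinearGroup.toGL s)⁻¹ * A) = A := by
      group
    have hdet : ((A : Matrix (Fin 2) (Fin 2) F)).det =
        (((Matrix.SpecialLinearGroup.toGL s)⁻¹ * A : Matrix.GeneralLinearGroup (Fin 2) F) :
          Matrix (Fin 2) (Fin 2) F).det := by
      conv_lhs => rw [← heq]
      rw [Units.val_mul, Matrix.det_mul]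
      have : ((Matrix.SpecialLinearGroup.toGL s : Matrix.GeneralLinearGroup (Fin 2) F) :
          Matrix (Fin 2) (Fin 2) F).det = 1 := s.2
      rw [this, one_mul]
    rw [hdet]
    exact hsq
  · rintro ⟨c, hc⟩
    have hc0 : c ≠ 0 := by
      rintro rfl
      have := A.val.isUnit_iff_isUnit_det.mp A.isUnit
      rw [hc] at this
      simp at this
    have hz1 : ((c • 1 : Matrix (Fin 2) (Fin 2) F)) * (c⁻¹ • 1) = 1 := by
      rw [Matrix.smul_mul, Matrix.mul_smul, smul_smul, mul_inv_cancel₀ hc0, one_smul, one_mul]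
    have hz2 : ((c⁻¹ • 1 : Matrix (Fin 2) (Fin 2) F)) * (c • 1) = 1 := by
      rw [Matrix.smul_mul, Matrix.mul_smul, smul_smul, inv_mul_cancel₀ hc0, one_smul, one_mul]
    set z : Matrix.GeneralLinearGroup (Fin 2) F := ⟨c • 1, c⁻¹ • 1, hz1, hz2⟩ with hzdef
    have hzc : z ∈ Subgroup.center (Matrix.GeneralLinearGroup (Fin 2) F) := by
      refine Subgroup.mem_center_iff.mpr fun g => Units.ext ?_
      simp only [hzdef, Units.val_mul]
      rw [Matrix.mul_smul, Matrix.smul_mul, mul_one, one_mul]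
    have hdet1 : ((z⁻¹ * A : Matrix.GeneralLinearGroup (Fin 2) F) :
        Matrix (Fin 2) (Fin 2) F).det = 1 := by
      have hzinv : ((z⁻¹ : Matrix.GeneralLinearGroup (Fin 2) F) :
          Matrix (Fin 2) (Fin 2) F) = c⁻¹ • 1 := rfl
      rw [Units.val_mul, hzinv, Matrix.det_mul, Matrix.det_smul, Matrix.det_one, hc]
      simp only [Fintype.card_fin, mul_one]
      field_simp
    refine ⟨⟨((z⁻¹ * A : Matrix.GeneralLinearGroup (Fin 2) F) :
      Matrix (Fin 2) (Fin 2) F), hdet1⟩, ?_⟩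
    have htoGL : Matrix.SpecialLinearGroup.toGL
        (⟨((z⁻¹ * A : Matrix.GeneralLinearGroup (Fin 2) F) :
          Matrix (Fin 2) (Fin 2) F), hdet1⟩ : Matrix.SpecialLinearGroup (Fin 2) F) =
        z⁻¹ * A := Units.ext rfl
    show QuotientGroup.mk _ = QuotientGroup.mk A
    rw [htoGL, QuotientGroup.eq]
    have : (z⁻¹ * A)⁻¹ * A = A⁻¹ * z * A := by group
    rw [this]
    have hcomm := Subgroup.mem_center_iff.mp hzc A⁻¹
    rw [hcomm, mul_assoc, inv_mul_cancel, mul_one]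
    exact hzc

/-- The product of two elements outside the socle lies in the socle. -/
lemma aux_mul_mem_socle [Fintype F] {a b : ProjectiveGL2 F}
    (ha : a ∉ socleSL2 F) (hb : b ∉ socleSL2 F) : a * b ∈ socleSL2 F := by
  obtain ⟨A, rfl⟩ := QuotientGroup.mk_surjective a
  obtain ⟨B, rfl⟩ := QuotientGroup.mk_surjective b
  rw [aux_mem_socle_iff] at ha hb
  have : (QuotientGroup.mk A : ProjectiveGL2 F) * QuotientGroup.mk B =
      QuotientGroup.mk (A * B) := rfl
  rw [this, aux_mem_socle_iff, Units.val_mul, Matrix.det_mul]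
  exact aux_nonsq_mul ha hb

end Aux

/-- Every Klein four-subgroup of `PGL₂(q)` containing an outer involution `x` contains
exactly one involution in the socle and exactly two involutions (including `x`)
outside the socle. -/
theorem klein_four_containing_outer_involution_type (p n : ℕ) (hp : Nat.Prime p) (hodd : Odd p) (hn : 1 ≤ n)
    (F : Type) [Field F] [Fintype F] (hF : Fintype.card F = p ^ 2 ^ n)
    (x : ProjectiveGL2 F) (hx : orderOf x = 2) (hxS : x ∉ socleSL2 F)
    (V : Subgroup (ProjectiveGL2 F)) (hV : IsKleinFour ↥V) (hxV : x ∈ V) :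
    {y : ProjectiveGL2 F | y ∈ V ∧ orderOf y = 2 ∧ y ∈ socleSL2 F}.ncard = 1 ∧
    {y : ProjectiveGL2 F | y ∈ V ∧ orderOf y = 2 ∧ y ∉ socleSL2 F}.ncard = 2 ∧
    x ∈ {y : ProjectiveGL2 F | y ∈ V ∧ orderOf y = 2 ∧ y ∉ socleSL2 F} := by
  classical
  have hx1 : x ≠ 1 := by
    intro h; rw [h, orderOf_one] at hx; exact absurd hx (by norm_num)
  -- every nontrivial element of V has order 2
  have hord : ∀ y ∈ V, y ≠ 1 → orderOf y = 2 := by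
    intro y hy hy1
    have h1 : orderOf (⟨y, hy⟩ : V) ∣ 2 :=
      (Monoid.order_dvd_exponent _).trans (dvd_of_eq hV.exponent_two)
    rw [Subgroup.orderOf_mk] at h1
    rcases (Nat.Prime.eq_one_or_self_of_dvd Nat.prime_two _ h1) with h | h
    · exact absurd (orderOf_eq_one_iff.mp h) hy1
    · exact h
  -- find b ∈ V, b ∉ {1, x}
  have hVcard : (V : Set (ProjectiveGL2 F)).ncard = 4 := by
    rw [← Nat.card_coe_set_eq, SetLike.coe_sort_coe, hV.card_four]
  have hnsub : ¬ (V : Set (ProjectiveGL2 F)) ⊆ {1, x} := by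
    intro h
    have := Set.ncard_le_ncard h (Set.toFinite _)
    rw [hVcard] at this
    have h2 : ({1, x} : Set (ProjectiveGL2 F)).ncard ≤ 2 :=
      (Set.ncard_insert_le _ _).trans (by rw [Set.ncard_singleton])
    omega
  obtain ⟨b, hbV, hbnot⟩ := Set.not_subset.mp hnsub
  simp only [Set.mem_insert_iff, Set.mem_singleton_iff, not_or] at hbnot
  obtain ⟨hb1, hbx⟩ := hbnot
  have hxx : x * x = 1 := by
    have := pow_orderOf_eq_one x
    rwa [hx, sq] at this
  have hxinv : x⁻¹ = x := inv_eq_of_mul_eq_one_left hxx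
  have hxb1 : x * b ≠ 1 := fun h => hbx ((eq_inv_of_mul_eq_one_right h).trans hxinv)
  have hxbx : x * b ≠ x := fun h => hb1 (mul_left_cancel (a := x) (by rw [h, mul_one]))
  have hxbb : x * b ≠ b := fun h => hx1 (mul_right_cancel (b := b) (by rw [h, one_mul]))
  have hxbV : x * b ∈ V := mul_mem hxV hbV
  have hVset : (V : Set (ProjectiveGL2 F)) = {1, x, b, x * b} := by
    refine (Set.eq_of_subset_of_ncard_le ?_ ?_ (Set.toFinite _)).symm
    · intro y hy
      rcases hy with rfl | rfl | rfl | rfl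
      · exact one_mem V
      · exact hxV
      · exact hbV
      · exact hxbV
    · rw [hVcard]
      rw [Set.ncard_insert_of_notMem (by
          simp only [Set.mem_insert_iff, Set.mem_singleton_iff, not_or]
          exact ⟨fun h => hx1 h.symm, fun h => hb1 h.symm, fun h => hxb1 h.symm⟩) (Set.toFinite _),
        Set.ncard_insert_of_notMem (by
          simp only [Set.mem_insert_iff, Set.mem_singleton_iff, not_or]
          exact ⟨fun h => hbx h.symm, fun h => hxbx h.symm⟩) (Set.toFinite _),
        Set.ncard_insert_of_notMem (by
          simp only [Set.mem_singleton_iff]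
          exact fun h => hxbb h.symm) (Set.toFinite _),
        Set.ncard_singleton]
  have hmemV : ∀ y, y ∈ V ↔ y = 1 ∨ y = x ∨ y = b ∨ y = x * b := by
    intro y
    rw [← SetLike.mem_coe, hVset]
    simp [Set.mem_insert_iff]
  have hxmem : x ∈ {y : ProjectiveGL2 F | y ∈ V ∧ orderOf y = 2 ∧ y ∉ socleSL2 F} :=
    ⟨hxV, hx, hxS⟩
  by_cases hbS : b ∈ socleSL2 F
  · -- b is the socle involution
    have hxbS : x * b ∉ socleSL2 F := by
      intro h
      have : (x * b) * b⁻¹ ∈ socleSL2 F := mul_mem h (inv_mem hbS)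
      rw [mul_assoc, mul_inv_cancel, mul_one] at this
      exact hxS this
    refine ⟨?_, ?_, hxmem⟩
    · have : {y : ProjectiveGL2 F | y ∈ V ∧ orderOf y = 2 ∧ y ∈ socleSL2 F} = {b} := by
        ext y
        simp only [Set.mem_setOf_eq, Set.mem_singleton_iff]
        constructor
        · rintro ⟨hyV, hy2, hyS⟩
          rcases (hmemV y).mp hyV with rfl | rfl | rfl | rfl
          · rw [orderOf_one] at hy2; norm_num at hy2
          · exact absurd hyS hxS
          · rfl
          · exact absurd hyS hxbS
        · rintro rfl
          exact ⟨hbV, hord _ hbV hb1, hbS⟩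
      rw [this, Set.ncard_singleton]
    · have : {y : ProjectiveGL2 F | y ∈ V ∧ orderOf y = 2 ∧ y ∉ socleSL2 F} = {x, x * b} := by
        ext y
        simp only [Set.mem_setOf_eq, Set.mem_insert_iff, Set.mem_singleton_iff]
        constructor
        · rintro ⟨hyV, hy2, hyS⟩
          rcases (hmemV y).mp hyV with rfl | rfl | rfl | rfl
          · rw [orderOf_one] at hy2; norm_num at hy2
          · exact Or.inl rfl
          · exact absurd hbS hyS
          · exact Or.inr rfl
        · rintro (rfl | rfl)
          · exact ⟨hxV, hx, hxS⟩
          · exact ⟨hxbV, hord _ hxbV hxb1, hxbS⟩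
      rw [this, Set.ncard_pair hxbx.symm]
  · -- x*b is the socle involution
    have hxbS : x * b ∈ socleSL2 F := aux_mul_mem_socle hxS hbS
    refine ⟨?_, ?_, hxmem⟩
    · have : {y : ProjectiveGL2 F | y ∈ V ∧ orderOf y = 2 ∧ y ∈ socleSL2 F} = {x * b} := by
        ext y
        simp only [Set.mem_setOf_eq, Set.mem_singleton_iff]
        constructor
        · rintro ⟨hyV, hy2, hyS⟩
          rcases (hmemV y).mp hyV with rfl | rfl | rfl | rfl
          · rw [orderOf_one] at hy2; norm_num at hy2
          · exact absurd hyS hxS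
          · exact absurd hyS hbS
          · rfl
        · rintro rfl
          exact ⟨hxbV, hord _ hxbV hxb1, hxbS⟩
      rw [this, Set.ncard_singleton]
    · have : {y : ProjectiveGL2 F | y ∈ V ∧ orderOf y = 2 ∧ y ∉ socleSL2 F} = {x, b} := by
        ext y
        simp only [Set.mem_setOf_eq, Set.mem_insert_iff, Set.mem_singleton_iff]
        constructor
        · rintro ⟨hyV, hy2, hyS⟩
          rcases (hmemV y).mp hyV with rfl | rfl | rfl | rfl
          · rw [orderOf_one] at hy2; norm_num at hy2
          · exact Or.inl rfl
          · exact Or.inr rfl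
          · exact absurd hxbS hyS
        · rintro (rfl | rfl)
          · exact ⟨hxV, hx, hxS⟩
          · exact ⟨hbV, hord _ hbV hb1, hbS⟩
      rw [this, Set.ncard_pair (fun h => hbx h.symm)]
end

section
/- Let p be an odd prime, n ≥ 1, q = p^(2^n), and G = PGL₂(F_q). Fix an involution x ∈ G not lying in the image of SL₂(F_q) in G. Then every subgroup H of G with H ≅ dihedral of order 2(q−1) and x ∈ H contains exactly one Klein four-subgroup containing x. -/
open Matrix

/-!
Squares of `PGL₂(F)` lie in the image of `SL₂(F)`, because `A² = det A • (det A⁻¹ • A²)`.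
Hence the outer involution `x` is a non-square involution of `H ≅ D_m`, `m = q - 1`. As `q` is
the square of an odd number, `4 ∣ m`, so the half-turn `r^(m/2) = (r^(m/4))²` is a square and `x`
must be a reflection. The centralizer of a reflection `s` in `D_m`, `m` even, is the Klein
four-group `{1, r^(m/2), s, s r^(m/2)}`; a Klein four-subgroup of `H` through `x` is abelian, so it
lies in that centralizer and, having order four, equals it.
-/

theorem sq_mem_socleSL2 {F : Type} [Field F] (g : ProjectiveGL2 F) : g ^ 2 ∈ socleSL2 F := by
  obtain ⟨A, rfl⟩ := QuotientGroup.mk_surjective g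
  set d : Fˣ := GeneralLinearGroup.det A
  let B : SpecialLinearGroup (Fin 2) F :=
    ⟨((d⁻¹ : Fˣ) : F) • ((A ^ 2 : GL (Fin 2) F) : Matrix _ _ F), by simp [d, A.det_ne_zero]⟩
  refine ⟨B, (QuotientGroup.mk'_eq_mk' _).mpr ⟨GeneralLinearGroup.scalar (Fin 2) d, ?_, ?_⟩⟩
  · rw [GeneralLinearGroup.center_eq_range_scalar]
    exact ⟨d, rfl⟩
  · ext : 1
    rw [Units.val_mul, SpecialLinearGroup.coe_GL_coe_matrix, GeneralLinearGroup.coe_scalar]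
    simp [B, scalar_apply, ← smul_eq_mul_diagonal, smul_smul]

theorem four_dvd_pow_two_pow_sub_one {p n : ℕ} (hp : Odd p) (hn : 1 ≤ n) :
    4 ∣ p ^ 2 ^ n - 1 := by
  obtain ⟨k, rfl⟩ := Nat.exists_eq_add_of_le' hn
  rw [pow_succ, pow_mul]
  exact (by norm_num : 4 ∣ 8).trans (Nat.eight_dvd_sq_sub_one_of_odd hp.pow)

open Subgroup

theorem ZMod.add_self_eq_zero_iff {m : ℕ} [NeZero m] (hm : Even m) {j : ZMod m} :
    j + j = 0 ↔ j = 0 ∨ j = ((m / 2 : ℕ) : ZMod m) := by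
  have hlt : j.val < m := j.val_lt
  have hhalf : (((m / 2 : ℕ) : ZMod m)).val = m / 2 := ZMod.val_cast_of_lt (by omega)
  rw [← ZMod.natCast_zmod_val j, ← Nat.cast_add, ZMod.natCast_eq_zero_iff,
    ← (ZMod.val_injective m).eq_iff, ← (ZMod.val_injective m).eq_iff,
    ZMod.val_natCast_of_lt hlt, ZMod.val_zero, hhalf]
  obtain ⟨k, rfl⟩ := hm
  constructor
  · rintro ⟨c, hc⟩
    have : c < 2 := by nlinarith
    interval_cases c <;> omega
  · rintro (h | h)
    · exact ⟨0, by omega⟩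
    · exact ⟨1, by omega⟩

namespace DihedralGroup

variable {m : ℕ}

theorem isSquare_r_of_add_self_eq_zero [NeZero m] (hm : 4 ∣ m) {j : ZMod m} (hj : j + j = 0) :
    IsSquare (r j) := by
  rw [← ZMod.natCast_zmod_val j, ← Nat.cast_add, ZMod.natCast_eq_zero_iff] at hj
  obtain ⟨k, hk⟩ : 2 ∣ j.val := by have := hm.trans hj; omega
  exact ⟨r k, by rw [r_mul_r, ← Nat.cast_add, ← two_mul, ← hk, ZMod.natCast_zmod_val]⟩

theorem exists_eq_sr_of_sq_eq_one [NeZero m] (hm : 4 ∣ m) {a : DihedralGroup m} (ha : a ^ 2 = 1)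
    (hsq : ¬IsSquare a) : ∃ i, a = sr i := by
  cases a with
  | r j =>
    rw [sq, r_mul_r, one_def, r.injEq] at ha
    exact absurd (isSquare_r_of_add_self_eq_zero hm ha) hsq
  | sr i => exact ⟨i, rfl⟩

theorem centralizer_sr [NeZero m] (hm : Even m) (i : ZMod m) :
    (centralizer {sr i} : Set (DihedralGroup m)) =
      {1, r ((m / 2 : ℕ) : ZMod m), sr i, sr (i + ((m / 2 : ℕ) : ZMod m))} := by
  ext g
  rw [SetLike.mem_coe, mem_centralizer_singleton_iff]
  cases g with
  | r j =>
    simp only [sr_mul_r, r_mul_sr, sr.injEq, one_def, Set.mem_insert_iff, Set.mem_singleton_iff,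
      r.injEq, reduceCtorEq, or_false]
    rw [← ZMod.add_self_eq_zero_iff hm]
    constructor <;> intro h <;> linear_combination -h
  | sr j =>
    simp only [sr_mul_sr, r.injEq, one_def, Set.mem_insert_iff, Set.mem_singleton_iff,
      sr.injEq, reduceCtorEq, false_or]
    have htorsion := ZMod.add_self_eq_zero_iff hm (j := j - i)
    rw [sub_eq_zero, sub_eq_iff_eq_add'] at htorsion
    rw [← htorsion]
    constructor <;> intro h <;> linear_combination -h

theorem isKleinFour_centralizer_sr [NeZero m] (hm : Even m) (i : ZMod m) :
    IsKleinFour (centralizer {sr i}) := by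
  set h : ZMod m := ((m / 2 : ℕ) : ZMod m)
  have hh : h ≠ 0 := by
    have hm0 := NeZero.ne m
    obtain ⟨k, rfl⟩ := hm
    rw [Ne, ZMod.natCast_eq_zero_iff]
    exact Nat.not_dvd_of_pos_of_lt (by omega) (by omega)
  have hsq : ∀ g ∈ centralizer {sr i}, g ^ 2 = 1 := by
    intro g hg
    rw [← SetLike.mem_coe, centralizer_sr hm] at hg
    rcases hg with rfl | rfl | rfl | rfl
    · exact one_pow 2
    · rw [sq, r_mul_r, (ZMod.add_self_eq_zero_iff hm).mpr (.inr rfl), r_zero]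
    all_goals exact (sq _).trans (sr_mul_self _)
  have hcard : Nat.card (centralizer {sr i}) = 4 := by
    rw [← SetLike.coe_sort_coe, Nat.card_coe_set_eq, centralizer_sr hm,
      Set.ncard_insert_of_notMem (by simpa [one_def, -r_zero] using hh.symm),
      Set.ncard_insert_of_notMem (by simp), Set.ncard_pair (by simpa using hh)]
  have : Finite (centralizer {sr i}) := Nat.finite_of_card_ne_zero (by omega)
  have : Nontrivial (centralizer {sr i}) := Finite.one_lt_card_iff_nontrivial.mp (by omega)
  refine ⟨hcard, (Monoid.exponent_eq_prime_iff Nat.prime_two).mpr fun g hg => ?_⟩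
  exact orderOf_eq_prime (Subtype.ext (hsq g g.2)) hg

end DihedralGroup

theorem IsKleinFour.of_mulEquiv {G G' : Type*} [Group G] [Group G'] [IsKleinFour G]
    (e : G ≃* G') : IsKleinFour G' where
  card_four := Nat.card_congr e.symm.toEquiv ▸ IsKleinFour.card_four
  exponent_two := Monoid.exponent_eq_of_mulEquiv e ▸ IsKleinFour.exponent_two

theorem existsUnique_isKleinFour_of_injective {D G : Type*} [Group D] [Group G] {ψ : D →* G}
    (hψ : Function.Injective ψ) {a : D} [IsKleinFour (centralizer {a})] :
    ∃! V : Subgroup G, V ≤ ψ.range ∧ IsKleinFour V ∧ ψ a ∈ V := by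
  set V₀ := (centralizer {a}).map ψ
  have hV₀ : IsKleinFour V₀ := .of_mulEquiv ((centralizer {a}).equivMapOfInjective ψ hψ)
  have haV₀ : ψ a ∈ V₀ := mem_map_of_mem ψ (mem_centralizer_singleton_iff.mpr rfl)
  refine ⟨V₀, ⟨map_le_range ψ _, hV₀, haV₀⟩, ?_⟩
  rintro V ⟨hVψ, hV, haV⟩
  have hle : V ≤ V₀ := by
    intro v hv
    obtain ⟨d, rfl⟩ := hVψ hv
    have hcomm : ψ d * ψ a = ψ a * ψ d :=
      congrArg Subtype.val <|
        IsKleinFour.isMulCommutative.is_comm.comm (⟨_, hv⟩ : V) ⟨_, haV⟩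
    refine mem_map_of_mem ψ (mem_centralizer_singleton_iff.mpr (hψ ?_))
    simp only [map_mul, hcomm]
  have : Finite V₀ := Nat.finite_of_card_ne_zero (by simp)
  exact Subgroup.eq_of_le_of_card_ge hle (by simp)

theorem unique_klein_four_in_dihedral_general (p n : ℕ) (hp : Nat.Prime p) (hodd : Odd p) (hn : 1 ≤ n)
    (F : Type) [Field F]
    (x : ProjectiveGL2 F) (hx : orderOf x = 2) (hxS : x ∉ socleSL2 F)
    (H : Subgroup (ProjectiveGL2 F))
    (hH : Nonempty (H ≃* DihedralGroup (p ^ 2 ^ n - 1))) (hxH : x ∈ H) :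
    ∃! V : Subgroup (ProjectiveGL2 F), V ≤ H ∧ IsKleinFour ↥V ∧ x ∈ V := by
  obtain ⟨e⟩ := hH
  have hm4 : 4 ∣ p ^ 2 ^ n - 1 := four_dvd_pow_two_pow_sub_one hodd hn
  have : NeZero (p ^ 2 ^ n - 1) :=
    ⟨(Nat.sub_pos_of_lt (Nat.one_lt_pow (by positivity) hp.one_lt)).ne'⟩
  let ψ := H.subtype.comp e.symm.toMonoidHom
  have hψ : Function.Injective ψ := H.subtype_injective.comp e.symm.injective
  have hψH : ψ.range = H := by
    rw [MonoidHom.range_comp, MonoidHom.range_eq_top.mpr e.symm.surjective,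
      ← MonoidHom.range_eq_map, H.range_subtype]
  set a := e ⟨x, hxH⟩
  have hψa : ψ a = x := by simp [ψ, a]
  have ha : a ^ 2 = 1 := hψ (by rw [map_pow, hψa, map_one, orderOf_dvd_iff_pow_eq_one.mp hx.dvd])
  have hsq : ¬IsSquare a := by
    rintro ⟨b, hb⟩
    apply hxS
    rw [← hψa, hb, map_mul, ← sq]
    exact sq_mem_socleSL2 _
  obtain ⟨i, hi⟩ := DihedralGroup.exists_eq_sr_of_sq_eq_one hm4 ha hsq
  have := DihedralGroup.isKleinFour_centralizer_sr
    (even_iff_two_dvd.mpr ((by norm_num : 2 ∣ 4).trans hm4)) i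
  rw [← hψH, ← hψa, hi]
  exact existsUnique_isKleinFour_of_injective hψ

/-- Each dihedral subgroup of `PGL₂(q)` of order `2(q-1)` containing an outer
involution `x` contains exactly one Klein four-subgroup containing `x`. -/
theorem unique_klein_four_in_dihedral (p n : ℕ) (hp : Nat.Prime p) (hodd : Odd p) (hn : 1 ≤ n)
    (F : Type) [Field F] [Fintype F] (hF : Fintype.card F = p ^ 2 ^ n)
    (x : ProjectiveGL2 F) (hx : orderOf x = 2) (hxS : x ∉ socleSL2 F)
    (H : Subgroup (ProjectiveGL2 F))
    (hH : Nonempty (H ≃* DihedralGroup (p ^ 2 ^ n - 1))) (hxH : x ∈ H) :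
    ∃! V : Subgroup (ProjectiveGL2 F), V ≤ H ∧ IsKleinFour ↥V ∧ x ∈ V :=
  unique_klein_four_in_dihedral_general p n hp hodd hn F x hx hxS H hH hxH
end

section
/- Let p be an odd prime, n ≥ 1, q = p^(2^n), and G = PGL₂(F_q). If x ∈ G is an involution not lying in the image of SL₂(F_q) in G, then the index of the centralizer of x in G, which equals the size of the conjugacy class of x, is q(q−1)/2. -/
open Matrix

/-!
An involution of `PGL₂(q)` lifts to `g ∈ GL₂(q)` with `g²` scalar and `g` not scalar, which by
Cayley–Hamilton forces `tr g = 0`; it lies outside the image of `SL₂(q)` exactly when `det g` is a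
nonsquare. Conversely, in odd characteristic any two trace-zero matrices with the same nonzero
determinant are conjugate (both are conjugate to the companion matrix of `X² + det`), and any two
nonsquare determinants differ by a square factor, i.e. by rescaling with a scalar. So the preimage in
`GL₂(q)` of the conjugacy class of an outer involution is the set of trace-zero matrices with
nonsquare determinant. When `-1` is a square (here `q ≡ 1 mod 4`) a matrix `!![a, b; c, -a]` lies in
it iff `a² + bc` is a nonsquare, which forces `b ≠ 0` and determines `c`; this gives
`q (q - 1) (q - 1) / 2` matrices, and dividing by the `q - 1` scalars leaves `q (q - 1) / 2`.
-/

theorem Nat.pow_mod_four_eq_one_of_odd_of_even {p k : ℕ} (hp : Odd p) (hk : Even k) :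
    p ^ k % 4 = 1 := by
  obtain ⟨m, rfl⟩ := hk
  obtain ⟨j, hj⟩ := hp.pow (n := m)
  rw [← two_mul, pow_mul', hj, show (2 * j + 1) ^ 2 = 4 * (j * j + j) + 1 by ring]
  omega

theorem isSquare_neg_iff_of_isSquare_neg_one {R : Type*} [CommRing R] (h : IsSquare (-1 : R))
    {a : R} : IsSquare (-a) ↔ IsSquare a :=
  ⟨fun ha => by simpa using h.mul ha, fun ha => by simpa using h.mul ha⟩

namespace FiniteField

variable {F : Type*} [Field F] [Fintype F]

theorem isSquare_mul_of_not_isSquare {a b : F} (ha : ¬IsSquare a) (hb : ¬IsSquare b) :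
    IsSquare (a * b) := by
  classical
  have ha0 : a ≠ 0 := by rintro rfl; exact ha ⟨0, by ring⟩
  have hb0 : b ≠ 0 := by rintro rfl; exact hb ⟨0, by ring⟩
  rw [← quadraticChar_neg_one_iff_not_isSquare] at ha hb
  rw [← quadraticChar_one_iff_isSquare (mul_ne_zero ha0 hb0), map_mul, ha, hb]
  norm_num

theorem card_nonsquares_mul_two_add_one (hF : ringChar F ≠ 2) :
    Nat.card {a : F // ¬IsSquare a} * 2 + 1 = Nat.card F := by
  classical
  obtain ⟨u, hu⟩ := quadraticChar_exists_neg_one hF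
  have hu0 : u ≠ 0 := by rintro rfl; simp at hu
  simp_rw [← quadraticChar_neg_one_iff_not_isSquare]
  have hswap : Nat.card {a : F // quadraticChar F a = 1} =
      Nat.card {a : F // quadraticChar F a = -1} :=
    Nat.card_congr <| (Equiv.mulLeft₀ u hu0).subtypeEquiv fun a => by
      simp [map_mul, hu, neg_eq_iff_eq_neg]
  have hsplit : Nat.card {a : F // a ≠ 0} =
      Nat.card {a : F // quadraticChar F a = 1} + Nat.card {a : F // quadraticChar F a = -1} := by
    rw [← Nat.card_sum, ← Nat.card_congr (subtypeOrEquiv _ _ ?_)]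
    · exact Nat.card_congr (Equiv.subtypeEquivRight fun a =>
        ⟨quadraticChar_dichotomy, by rintro (h | h) rfl <;> simp at h⟩)
    · simp only [Pi.disjoint_iff, Prop.disjoint_iff]
      rintro a ⟨h1, h2⟩
      omega
  rw [← Nat.card_congr unitsEquivNeZero, Nat.card_units] at hsplit
  have := Nat.card_pos (α := F)
  omega

end FiniteField

theorem Units.isConj_of_isConj_val {M : Type*} [Monoid M] {u v : Mˣ}
    (h : IsConj (u : M) (v : M)) : IsConj u v := by
  obtain ⟨c, hc⟩ := h
  exact isConj_iff.mpr ⟨c, mul_inv_eq_of_eq_mul (Units.ext hc)⟩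

theorem Subgroup.index_centralizer_eq_ncard_isConj {G : Type*} [Group G] (x : G) :
    (Subgroup.centralizer {x}).index = {y | IsConj x y}.ncard := by
  rw [Subgroup.centralizer_eq_comap_stabilizer]
  refine (Subgroup.index_comap_of_surjective _ (f := ConjAct.toConjAct.toMonoidHom)
    ConjAct.toConjAct.surjective).trans ((MulAction.index_stabilizer (ConjAct G) x).trans ?_)
  congr 1
  ext y
  rw [ConjAct.mem_orbit_conjAct, Set.mem_ofPred_eq, isConj_comm]

namespace Matrix

theorem sq_eq_trace_smul_sub_det_smul {R : Type*} [CommRing R] (M : Matrix (Fin 2) (Fin 2) R) :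
    M ^ 2 = M.trace • M - M.det • 1 := by
  rw [eta_fin_two M]
  ext i j
  fin_cases i <;> fin_cases j <;> simp [sq, trace_fin_two, det_fin_two] <;> ring

variable {F : Type*} [Field F]

theorem isConj_companion_of_trace_eq_zero (h2 : (2 : F) ≠ 0) {M : Matrix (Fin 2) (Fin 2) F}
    (htr : M.trace = 0) (hdet : M.det ≠ 0) : IsConj !![0, -M.det; 1, 0] M := by
  obtain ⟨a, b, c, rfl⟩ : ∃ a b c : F, M = !![a, b; c, -a] :=
    ⟨M 0 0, M 0 1, M 1 0, by
      rw [trace_fin_two] at htr; rw [← eq_neg_of_add_eq_zero_right htr]; exact eta_fin_two M⟩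
  rw [det_fin_two_of] at hdet ⊢
  -- the columns of `P x y` are `v = (x, y)` and `M v`, and `M (M v) = -det M • v`
  let P (x y : F) : Matrix (Fin 2) (Fin 2) F := !![x, a * x + b * y; y, c * x - a * y]
  have hP (x y : F) : P x y * !![0, -(a * -a - b * c); 1, 0] = !![a, b; c, -a] * P x y := by
    ext i j
    fin_cases i <;> fin_cases j <;> simp [P, mul_apply, Fin.sum_univ_two] <;> ring
  have hdetP (x y : F) : (P x y).det = c * x ^ 2 - 2 * a * x * y - b * y ^ 2 := by
    rw [det_fin_two_of]; ring
  suffices ∃ x y, (P x y).det ≠ 0 by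
    obtain ⟨x, y, hxy⟩ := this
    exact ⟨((isUnit_iff_isUnit_det _).mpr (isUnit_iff_ne_zero.mpr hxy)).unit, hP x y⟩
  by_cases hc : c = 0
  · by_cases hb : b = 0
    · have ha : a ≠ 0 := by rintro rfl; simp [hb] at hdet
      exact ⟨1, 1, by simpa [hdetP, hb, hc] using mul_ne_zero h2 ha⟩
    · exact ⟨0, 1, by simpa [hdetP] using hb⟩
  · exact ⟨1, 0, by simpa [hdetP] using hc⟩

theorem card_traceZero_not_isSquare_neg_det :
    Nat.card {M : Matrix (Fin 2) (Fin 2) F // M.trace = 0 ∧ ¬IsSquare (-M.det)} =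
      Nat.card F * ((Nat.card F - 1) * Nat.card {d : F // ¬IsSquare d}) := by
  have h11 {M : Matrix (Fin 2) (Fin 2) F} (htr : M.trace = 0) : M 1 1 = -M 0 0 := by
    rw [trace_fin_two] at htr; linear_combination htr
  have hneg_det {M : Matrix (Fin 2) (Fin 2) F} (htr : M.trace = 0) :
      -M.det = M 0 0 ^ 2 + M 0 1 * M 1 0 := by
    rw [det_fin_two, h11 htr]; ring
  have hb {M : Matrix (Fin 2) (Fin 2) F} (hM : M.trace = 0 ∧ ¬IsSquare (-M.det)) :
      M 0 1 ≠ 0 := by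
    intro h0; apply hM.2; rw [hneg_det hM.1, h0, zero_mul, add_zero]; exact ⟨M 0 0, sq _⟩
  let e : {M : Matrix (Fin 2) (Fin 2) F // M.trace = 0 ∧ ¬IsSquare (-M.det)} ≃
      F × {b : F // b ≠ 0} × {d : F // ¬IsSquare d} :=
    { toFun M := (M.1 0 0, ⟨M.1 0 1, hb M.2⟩, ⟨-M.1.det, M.2.2⟩)
      invFun z := ⟨!![z.1, z.2.1; (z.2.2 - z.1 ^ 2) / z.2.1, -z.1], by
        refine ⟨by simp [trace_fin_two], ?_⟩
        rw [det_fin_two_of, mul_div_cancel₀ _ z.2.1.2]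
        convert z.2.2.2 using 2
        ring⟩
      left_inv M := by
        obtain ⟨M, hM⟩ := M
        ext i j
        fin_cases i <;> fin_cases j
        · rfl
        · rfl
        · simp [hneg_det hM.1, hb hM]
        · simp [h11 hM.1]
      right_inv z := by
        obtain ⟨a, ⟨b, hb⟩, ⟨d, hd⟩⟩ := z
        ext
        · rfl
        · rfl
        · simp only [det_fin_two_of, mul_div_cancel₀ _ hb]
          ring }
  rw [Nat.card_congr e, Nat.card_prod, Nat.card_prod, ← Nat.card_congr unitsEquivNeZero,
    Nat.card_units]

end Matrix

namespace Matrix.GeneralLinearGroup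

variable {F : Type*} [Field F]

theorem scalar_mem_center {n : Type*} [Fintype n] [DecidableEq n] (u : Fˣ) :
    scalar n u ∈ Subgroup.center (GL n F) :=
  center_eq_range_scalar (n := n) (R := F) ▸ ⟨u, rfl⟩

theorem card_center {n : Type*} [Fintype n] [DecidableEq n] [Nonempty n] :
    Nat.card (Subgroup.center (GL n F)) = Nat.card F - 1 := by
  obtain ⟨i⟩ := ‹Nonempty n›
  have hinj : Function.Injective (scalar n : Fˣ →* GL n F) := fun u v h =>
    Units.ext <| by simpa using congrArg (fun g : GL n F => g i i) h
  rw [center_eq_range_scalar, ← Nat.card_congr (MonoidHom.ofInjective hinj).toEquiv,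
    Nat.card_units]

theorem det_scalar_mul (u : Fˣ) (g : GL (Fin 2) F) :
    (scalar (Fin 2) u * g).val.det = (u : F) ^ 2 * g.val.det := by
  simp [det_mul]

theorem trace_scalar_mul (u : Fˣ) (g : GL (Fin 2) F) :
    (scalar (Fin 2) u * g).val.trace = u * g.val.trace := by
  simp [scalar_apply, ← smul_eq_diagonal_mul]

theorem trace_eq_zero_of_sq_mem_center {g : GL (Fin 2) F}
    (hg : g ∉ Subgroup.center (GL (Fin 2) F)) (hg2 : g ^ 2 ∈ Subgroup.center (GL (Fin 2) F)) :
    g.val.trace = 0 := by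
  obtain ⟨c, hc⟩ := mem_center_iff_val_mem_range_scalar.mp hg2
  by_contra htr
  -- by Cayley–Hamilton `tr g • g = g ^ 2 + det g • 1` is scalar
  refine hg (mem_center_iff_val_mem_range_scalar.mpr ⟨(g.val.trace)⁻¹ * (c + g.val.det), ?_⟩)
  have hcayley := sq_eq_trace_smul_sub_det_smul g.val
  rw [← Units.val_pow_eq_pow_val, ← hc, scalar_apply, ← smul_one_eq_diagonal] at hcayley
  rw [scalar_apply, ← smul_one_eq_diagonal, mul_smul, add_smul, hcayley, inv_smul_eq_iff₀ htr]
  abel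

theorem isConj_of_trace_eq_zero_of_det_eq (h2 : (2 : F) ≠ 0) {g h : GL (Fin 2) F}
    (hg : g.val.trace = 0) (hh : h.val.trace = 0) (hdet : g.val.det = h.val.det) :
    IsConj g h :=
  Units.isConj_of_isConj_val <|
    (isConj_companion_of_trace_eq_zero h2 hg (det_ne_zero g)).symm.trans
      (hdet ▸ isConj_companion_of_trace_eq_zero h2 hh (det_ne_zero h))

end Matrix.GeneralLinearGroup

open Matrix.GeneralLinearGroup

theorem mk_mem_socleSL2_of_isSquare_det {F : Type} [Field F] {g : GL (Fin 2) F}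
    (hg : IsSquare g.val.det) : (g : ProjectiveGL2 F) ∈ socleSL2 F := by
  obtain ⟨s, hs⟩ := hg
  have hs0 : s ≠ 0 := by rintro rfl; exact det_ne_zero g (by simpa using hs)
  set u := Units.mk0 s hs0
  have hdet : GeneralLinearGroup.det (scalar (Fin 2) u⁻¹ * g) = 1 := by
    ext
    rw [val_det_apply, det_scalar_mul, hs, Units.val_inv_eq_inv_val, Units.val_mk0, Units.val_one]
    field_simp
  obtain ⟨t, ht⟩ : scalar (Fin 2) u⁻¹ * g ∈ Set.range SpecialLinearGroup.toGL := by
    rw [SpecialLinearGroup.range_toGL]; exact hdet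
  refine ⟨t, ?_⟩
  rw [MonoidHom.comp_apply, ht, QuotientGroup.mk'_apply, QuotientGroup.mk_mul,
    (QuotientGroup.eq_one_iff _).mpr (scalar_mem_center _), one_mul]

def traceZeroNonsquareDet (F : Type*) [Field F] : Set (GL (Fin 2) F) :=
  {g | g.val.trace = 0 ∧ ¬IsSquare g.val.det}

namespace traceZeroNonsquareDet

variable {F : Type*} [Field F]

theorem scalar_mul_mem {g : GL (Fin 2) F} (hg : g ∈ traceZeroNonsquareDet F) (u : Fˣ) :
    scalar (Fin 2) u * g ∈ traceZeroNonsquareDet F := by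
  refine ⟨by rw [trace_scalar_mul, hg.1, mul_zero], fun hsq => hg.2 ?_⟩
  obtain ⟨t, ht⟩ := hsq
  rw [det_scalar_mul] at ht
  refine ⟨(u : F)⁻¹ * t, ?_⟩
  field_simp
  linear_combination ht

theorem conj_mem {g : GL (Fin 2) F} (hg : g ∈ traceZeroNonsquareDet F) (h : GL (Fin 2) F) :
    h * g * h⁻¹ ∈ traceZeroNonsquareDet F := by
  simpa only [traceZeroNonsquareDet, Set.mem_ofPred_eq, Units.val_mul, trace_units_conj,
    det_units_conj] using hg

theorem exists_isConj_scalar_mul [Fintype F] (h2 : (2 : F) ≠ 0) {g h : GL (Fin 2) F}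
    (hg : g ∈ traceZeroNonsquareDet F) (hh : h ∈ traceZeroNonsquareDet F) :
    ∃ u : Fˣ, IsConj (scalar (Fin 2) u * g) h := by
  obtain ⟨s, hs⟩ := FiniteField.isSquare_mul_of_not_isSquare hg.2 hh.2
  have hs0 : s ≠ 0 := by
    rintro rfl; exact mul_ne_zero (det_ne_zero g) (det_ne_zero h) (by simpa using hs)
  have hg0 := det_ne_zero g
  refine ⟨Units.mk0 (s / g.val.det) (div_ne_zero hs0 hg0),
    isConj_of_trace_eq_zero_of_det_eq h2 (scalar_mul_mem hg _).1 hh.1 ?_⟩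
  rw [det_scalar_mul, Units.val_mk0, div_pow, sq, ← hs]
  field_simp

theorem card (hneg : IsSquare (-1 : F)) :
    Nat.card (traceZeroNonsquareDet F) =
      Nat.card F * ((Nat.card F - 1) * Nat.card {d : F // ¬IsSquare d}) := by
  have hval : Units.val '' traceZeroNonsquareDet F =
      {M : Matrix (Fin 2) (Fin 2) F | M.trace = 0 ∧ ¬IsSquare (-M.det)} := by
    ext M
    rw [Set.mem_ofPred_eq, isSquare_neg_iff_of_isSquare_neg_one hneg]
    refine ⟨fun ⟨g, hg, hgM⟩ => hgM ▸ hg, fun hM => ?_⟩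
    have hdet : M.det ≠ 0 := fun h0 => hM.2 (h0 ▸ ⟨0, by ring⟩)
    exact ⟨((isUnit_iff_isUnit_det M).mpr (isUnit_iff_ne_zero.mpr hdet)).unit, hM, rfl⟩
  rw [← Nat.card_image_of_injective Units.val_injective, hval]
  exact card_traceZero_not_isSquare_neg_det

end traceZeroNonsquareDet

open traceZeroNonsquareDet

section ProjectiveGL2

variable {F : Type} [Field F]

theorem exists_mk_mem_traceZeroNonsquareDet {x : ProjectiveGL2 F} (hx : orderOf x = 2)
    (hxS : x ∉ socleSL2 F) : ∃ g ∈ traceZeroNonsquareDet F, (g : ProjectiveGL2 F) = x := by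
  obtain ⟨g, rfl⟩ := QuotientGroup.mk_surjective x
  have hg : g ∉ Subgroup.center (GL (Fin 2) F) := fun hg =>
    by simp [(QuotientGroup.eq_one_iff g).mpr hg] at hx
  have hg2 : g ^ 2 ∈ Subgroup.center (GL (Fin 2) F) := by
    rw [← QuotientGroup.eq_one_iff, QuotientGroup.mk_pow]
    exact ((orderOf_eq_iff two_pos).mp hx).1
  exact ⟨g, ⟨trace_eq_zero_of_sq_mem_center hg hg2,
    fun hsq => hxS (mk_mem_socleSL2_of_isSquare_det hsq)⟩, rfl⟩

theorem preimage_setOf_isConj_mk [Fintype F] (h2 : (2 : F) ≠ 0) {g₀ : GL (Fin 2) F}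
    (hg₀ : g₀ ∈ traceZeroNonsquareDet F) :
    QuotientGroup.mk ⁻¹' {y : ProjectiveGL2 F | IsConj (g₀ : ProjectiveGL2 F) y} =
      traceZeroNonsquareDet F := by
  ext g
  simp only [Set.mem_preimage, Set.mem_ofPred_eq]
  constructor
  · intro hconj
    obtain ⟨c, hc⟩ := isConj_iff.mp hconj
    obtain ⟨h, rfl⟩ := QuotientGroup.mk_surjective c
    rw [← QuotientGroup.mk_inv, ← QuotientGroup.mk_mul, ← QuotientGroup.mk_mul,
      QuotientGroup.eq, center_eq_range_scalar] at hc
    obtain ⟨u, hu⟩ := hc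
    rw [eq_inv_mul_iff_mul_eq, ← GeneralLinearGroup.scalar_commute] at hu
    exact hu ▸ scalar_mul_mem (conj_mem hg₀ h) u
  · intro hg
    obtain ⟨u, hu⟩ := exists_isConj_scalar_mul h2 hg₀ hg
    have hmk : ((scalar (Fin 2) u * g₀ : GL (Fin 2) F) : ProjectiveGL2 F) = g₀ := by
      rw [QuotientGroup.mk_mul, (QuotientGroup.eq_one_iff _).mpr (scalar_mem_center _), one_mul]
    exact hmk ▸ (QuotientGroup.mk' _).map_isConj hu

theorem card_setOf_isConj_mk [Fintype F] (h2 : (2 : F) ≠ 0) (hneg : IsSquare (-1 : F))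
    {g₀ : GL (Fin 2) F} (hg₀ : g₀ ∈ traceZeroNonsquareDet F) :
    Nat.card {y : ProjectiveGL2 F | IsConj (g₀ : ProjectiveGL2 F) y} =
      Nat.card F * Nat.card {d : F // ¬IsSquare d} := by
  have h := QuotientGroup.card_preimage_mk _ {y : ProjectiveGL2 F | IsConj (g₀ : ProjectiveGL2 F) y}
  rw [preimage_setOf_isConj_mk h2 hg₀, traceZeroNonsquareDet.card hneg, card_center] at h
  have hq : 0 < Nat.card F - 1 := Nat.sub_pos_of_lt Finite.one_lt_card
  exact (Nat.eq_of_mul_eq_mul_left hq (by rw [← h]; ring)).symm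

end ProjectiveGL2

theorem index_centralizer_outer_involution_general (p n : ℕ) (hodd : Odd p) (hn : 1 ≤ n)
    (F : Type) [Field F] [Fintype F] (hF : Fintype.card F = p ^ 2 ^ n)
    (x : ProjectiveGL2 F) (hx : orderOf x = 2) (hxS : x ∉ socleSL2 F) :
    (Subgroup.centralizer {x}).index = p ^ 2 ^ n * (p ^ 2 ^ n - 1) / 2 ∧
    {y : ProjectiveGL2 F | IsConj x y}.ncard = p ^ 2 ^ n * (p ^ 2 ^ n - 1) / 2 := by
  have hq : Fintype.card F % 4 = 1 := hF ▸
    Nat.pow_mod_four_eq_one_of_odd_of_even hodd (Nat.even_pow.mpr ⟨even_two, by omega⟩)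
  have hchar : ringChar F ≠ 2 := by rw [Ne, FiniteField.even_card_iff_char_two]; omega
  have hneg : IsSquare (-1 : F) := FiniteField.isSquare_neg_one_iff.mpr (by omega)
  obtain ⟨g₀, hg₀, rfl⟩ := exists_mk_mem_traceZeroNonsquareDet hx hxS
  have hN := FiniteField.card_nonsquares_mul_two_add_one hchar
  have hclass : {y : ProjectiveGL2 F | IsConj (g₀ : ProjectiveGL2 F) y}.ncard =
      p ^ 2 ^ n * (p ^ 2 ^ n - 1) / 2 := by
    rw [← Nat.card_coe_set_eq, card_setOf_isConj_mk (Ring.two_ne_zero hchar) hneg hg₀, ← hF,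
      ← Nat.card_eq_fintype_card, ← hN, Nat.add_sub_cancel, ← mul_assoc,
      Nat.mul_div_cancel _ two_pos]
  exact ⟨(Subgroup.index_centralizer_eq_ncard_isConj _).trans hclass, hclass⟩

/-- The index of the centralizer of an outer involution of `PGL₂(q)` — equivalently
the size of its conjugacy class — is `q(q-1)/2`. -/
theorem index_centralizer_outer_involution (p n : ℕ) (hp : Nat.Prime p) (hodd : Odd p) (hn : 1 ≤ n)
    (F : Type) [Field F] [Fintype F] (hF : Fintype.card F = p ^ 2 ^ n)
    (x : ProjectiveGL2 F) (hx : orderOf x = 2) (hxS : x ∉ socleSL2 F) :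
    (Subgroup.centralizer {x}).index = p ^ 2 ^ n * (p ^ 2 ^ n - 1) / 2 ∧
    {y : ProjectiveGL2 F | IsConj x y}.ncard = p ^ 2 ^ n * (p ^ 2 ^ n - 1) / 2 :=
  index_centralizer_outer_involution_general p n hodd hn F hF x hx hxS
end
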